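/- arXiv:1706.05710 — 3 statements merged into one kernel-verified Lean document; each statement's English description precedes it below -/
import Mathlib

section
/- If f is a multiplicative arithmetic function such that the coefficients Λ_f of -F'/F (where F(s) = Σ f(n)/n^s) satisfy |Λ_f(n)| ≤ Λ(n) for all n ≥ 1 (Λ being the von Mangoldt function), then |f(n)| ≤ 1 for all n ≥ 1. -/
/-!
Strong induction on `n`. Comparing norms in `f(n) log n = Σ_{ab = n} Λ_f(a) f(b)` and bounding
`|Λ_f(a)|` by `Λ(a)` gives `|f(n)| log n ≤ Σ_{a ∣ n} Λ(a) = log n`: the term `a = 1`, the only one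
involving `f(n)` itself, vanishes because `|Λ_f(1)| ≤ Λ(1) = 0`, and every other term has `b < n`.
-/

open ArithmeticFunction

theorem norm_mul_apply_le_log {R : Type*} [SeminormedRing R] {g f : ArithmeticFunction R}
    (hg : ∀ m, ‖g m‖ ≤ Λ m) {n : ℕ} (hf : ∀ d ∈ n.properDivisors, ‖f d‖ ≤ 1) :
    ‖(g * f) n‖ ≤ Real.log n := by
  have hg_one : ‖g 1‖ = 0 := le_antisymm (by simpa using hg 1) (norm_nonneg _)
  have term_le (x : ℕ × ℕ) (hx : x ∈ n.divisorsAntidiagonal) : ‖g x.1 * f x.2‖ ≤ Λ x.1 := by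
    obtain ⟨hmul, hn⟩ := Nat.mem_divisorsAntidiagonal.mp hx
    by_cases h1 : x.1 = 1
    · simpa [h1, hg_one] using norm_mul_le (g 1) (f x.2)
    have hprod : x.1 * x.2 ≠ 0 := hmul ▸ hn
    have hx1 : 1 < x.1 := by
      have := left_ne_zero_of_mul hprod
      omega
    have hlt : x.2 < n := hmul ▸ lt_mul_left (Nat.pos_of_ne_zero (right_ne_zero_of_mul hprod)) hx1
    have hx2 : x.2 ∈ n.properDivisors :=
      Nat.mem_properDivisors.mpr ⟨Dvd.intro_left _ hmul, hlt⟩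
    calc ‖g x.1 * f x.2‖ ≤ ‖g x.1‖ * ‖f x.2‖ := norm_mul_le _ _
      _ ≤ ‖g x.1‖ := mul_le_of_le_one_right (norm_nonneg _) (hf _ hx2)
      _ ≤ Λ x.1 := hg _
  calc ‖(g * f) n‖ ≤ ∑ x ∈ n.divisorsAntidiagonal, Λ x.1 := by
        rw [mul_apply]; exact norm_sum_le_of_le _ term_le
    _ = Real.log n := by rw [Nat.sum_divisorsAntidiagonal (fun a _ => Λ a), vonMangoldt_sum]

theorem norm_apply_le_one_of_norm_vonMangoldt_coeff_le {𝕜 : Type*} [RCLike 𝕜]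
    {f Λf : ArithmeticFunction 𝕜} (hf_one : ‖f 1‖ ≤ 1)
    (hΛ : ∀ n : ℕ, f n * (Real.log n : 𝕜) = (Λf * f) n) (hC : ∀ n, ‖Λf n‖ ≤ Λ n) (n : ℕ) :
    ‖f n‖ ≤ 1 := by
  induction n using Nat.strong_induction_on with
  | _ n ih =>
  rcases lt_trichotomy n 1 with hn | rfl | hn
  · simp [Nat.lt_one_iff.mp hn]
  · exact hf_one
  have hlog : 0 < Real.log n := Real.log_pos (by exact_mod_cast hn)
  have key : ‖f n‖ * Real.log n ≤ Real.log n :=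
    calc ‖f n‖ * Real.log n = ‖(Λf * f) n‖ := by
          rw [← hΛ, norm_mul, RCLike.norm_ofReal, abs_of_pos hlog]
      _ ≤ Real.log n :=
          norm_mul_apply_le_log hC fun d hd => ih d (Nat.mem_properDivisors.mp hd).2
  exact (mul_le_iff_le_one_left hlog).mp key

/-- If `f` is a multiplicative arithmetic function whose "von Mangoldt coefficients"
`Λ_f` (defined by the identity `f(n) log n = (Λ_f * f)(n)`, Dirichlet convolution)
satisfy `|Λ_f(n)| ≤ Λ(n)` for all `n`, then `|f(n)| ≤ 1` for all `n ≥ 1`. -/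
theorem stmt_0 (f Λf : ArithmeticFunction ℂ) (hf : f.IsMultiplicative)
    (hΛ : ∀ n : ℕ, f n * (Real.log n : ℂ) = (Λf * f) n)
    (hC : ∀ n : ℕ, ‖Λf n‖ ≤ ArithmeticFunction.vonMangoldt n) :
    ∀ n : ℕ, 1 ≤ n → ‖f n‖ ≤ 1 :=
  fun n _ => norm_apply_le_one_of_norm_vonMangoldt_coeff_le (by simp [hf.map_one]) hΛ hC n
end

section
/- Let y ≥ 2 and V₀ ≥ 1. Every y-smooth integer n > V₀ admits a unique factorization n = u·v such that P⁺(u) ≤ P⁻(v), v > V₀, and v/P⁻(v) ≤ V₀, where P⁺(u) denotes the largest prime factor of u (with P⁺(1) = 1) and P⁻(v) the smallest prime factor of v (with P⁻(1) = ∞). -/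
/-!
Write the prime factors of `n` in ascending order, `p₁ ≤ ⋯ ≤ pₖ`, and let `vⱼ = pⱼ₊₁ ⋯ pₖ`.
The condition `P⁺(u) ≤ P⁻(v)` forces the factor list of `n` to be that of `u` followed by that of
`v`, so `v = vⱼ` for some `j < k`, and then `v / P⁻(v) = vⱼ₊₁`. Since `j ↦ vⱼ` decreases from
`v₀ = n > V₀` to `vₖ = 1 ≤ V₀`, there is exactly one `j` with `vⱼ₊₁ ≤ V₀ < vⱼ`.
-/

/-- The largest prime factor of `n`, with the convention `P⁺(1) = 1`. -/
def maxPrimeFac (n : ℕ) : ℕ := max (n.primeFactors.sup id) 1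

theorem Antitone.existsUnique_lt_of_le_succ {α : Type*} [LinearOrder α] {f : ℕ → α}
    (hf : Antitone f) {a : α} (h0 : a < f 0) (hN : ∃ N, f N ≤ a) :
    ∃! j, a < f j ∧ f (j + 1) ≤ a := by
  obtain ⟨j, hj⟩ : ∃ j, Nat.find hN = j + 1 :=
    Nat.exists_eq_add_one_of_ne_zero fun h => h0.not_ge ((Nat.find_eq_zero hN).1 h)
  have crossing_le : ∀ i k, a < f k → f (i + 1) ≤ a → k ≤ i := fun i k hk hi =>
    not_lt.1 fun hik => (hk.trans_le (hf hik)).not_ge hi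
  have hj0 : a < f j := not_le.1 (Nat.find_min hN (by omega))
  have hj1 : f (j + 1) ≤ a := hj ▸ Nat.find_spec hN
  exact ⟨j, ⟨hj0, hj1⟩, fun k hk =>
    le_antisymm (crossing_le j k hk.1 hj1) (crossing_le k j hj0 hk.2)⟩

theorem List.antitone_prod_drop {M : Type*} [CommMonoid M] [Preorder M] [MulLeftMono M]
    [MulRightMono M] {l : List M} (h : ∀ a ∈ l, 1 ≤ a) : Antitone fun j => (l.drop j).prod :=
  fun _ _ hjk => (l.drop_sublist_drop_left hjk).prod_le_prod' fun a ha => h a (mem_of_mem_drop ha)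

theorem le_maxPrimeFac {m p : ℕ} (h : p ∈ m.primeFactorsList) : p ≤ maxPrimeFac m :=
  (Finset.le_sup (f := id) (Nat.mem_primeFactors_iff_mem_primeFactorsList.2 h)).trans
    (le_max_left _ _)

theorem maxPrimeFac_le {m k : ℕ} (hk : 1 ≤ k) (h : ∀ p ∈ m.primeFactorsList, p ≤ k) :
    maxPrimeFac m ≤ k :=
  max_le (Finset.sup_le fun p hp => h p (Nat.mem_primeFactors_iff_mem_primeFactorsList.1 hp)) hk

namespace Nat

theorem primeFactorsList_prod_of_pairwise {l : List ℕ} (hs : l.Pairwise (· ≤ ·))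
    (hp : ∀ p ∈ l, p.Prime) : l.prod.primeFactorsList = l :=
  (List.Perm.eq_of_pairwise' hs (primeFactorsList_sorted _).pairwise
    (primeFactorsList_unique rfl hp)).symm

theorem minFac_eq_of_primeFactorsList_eq_cons {m p : ℕ} {t : List ℕ}
    (h : m.primeFactorsList = p :: t) : m.minFac = p := by
  rcases m with _ | _ | k
  · simp at h
  · simp at h
  · rw [primeFactorsList_add_two] at h
    exact (List.cons.inj h).1

theorem primeFactorsList_mul_of_maxPrimeFac_le {u v : ℕ} (hu : u ≠ 0) (hv : v ≠ 0)
    (h : maxPrimeFac u ≤ v.minFac) :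
    (u * v).primeFactorsList = u.primeFactorsList ++ v.primeFactorsList := by
  have hs : (u.primeFactorsList ++ v.primeFactorsList).Pairwise (· ≤ ·) :=
    List.pairwise_append.2 ⟨(primeFactorsList_sorted u).pairwise,
      (primeFactorsList_sorted v).pairwise, fun a ha b hb =>
        ((le_maxPrimeFac ha).trans h).trans
          (minFac_le_of_dvd (prime_of_mem_primeFactorsList hb).two_le
            (dvd_of_mem_primeFactorsList hb))⟩
  have hp : ∀ p ∈ u.primeFactorsList ++ v.primeFactorsList, p.Prime := fun p hp =>
    (List.mem_append.1 hp).elim prime_of_mem_primeFactorsList prime_of_mem_primeFactorsList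
  rw [← primeFactorsList_prod_of_pairwise hs hp, List.prod_append, prod_primeFactorsList hu,
    prod_primeFactorsList hv]

theorem exists_eq_prod_take_and_eq_prod_drop {n u v : ℕ} (hn : n ≠ 0) (huv : n = u * v)
    (h : maxPrimeFac u ≤ v.minFac) :
    ∃ j, u = (n.primeFactorsList.take j).prod ∧ v = (n.primeFactorsList.drop j).prod := by
  have hu : u ≠ 0 := left_ne_zero_of_mul (huv ▸ hn)
  have hv : v ≠ 0 := right_ne_zero_of_mul (huv ▸ hn)
  refine ⟨u.primeFactorsList.length, ?_, ?_⟩ <;>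
    rw [huv, primeFactorsList_mul_of_maxPrimeFac_le hu hv h]
  · rw [List.take_left' rfl, prod_primeFactorsList hu]
  · rw [List.drop_left' rfl, prod_primeFactorsList hv]

section SuffixProducts

variable {n j : ℕ}

theorem primeFactorsList_prod_drop (n j : ℕ) :
    (n.primeFactorsList.drop j).prod.primeFactorsList = n.primeFactorsList.drop j :=
  primeFactorsList_prod_of_pairwise ((primeFactorsList_sorted n).pairwise.sublist
    (List.drop_sublist _ _)) fun _ hp => prime_of_mem_primeFactorsList (List.mem_of_mem_drop hp)

theorem primeFactorsList_prod_take (n j : ℕ) :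
    (n.primeFactorsList.take j).prod.primeFactorsList = n.primeFactorsList.take j :=
  primeFactorsList_prod_of_pairwise ((primeFactorsList_sorted n).pairwise.sublist
    (List.take_sublist _ _)) fun _ hp => prime_of_mem_primeFactorsList (List.mem_of_mem_take hp)

theorem minFac_prod_drop_primeFactorsList (hj : j < n.primeFactorsList.length) :
    (n.primeFactorsList.drop j).prod.minFac = n.primeFactorsList[j] :=
  minFac_eq_of_primeFactorsList_eq_cons
    ((primeFactorsList_prod_drop n j).trans (List.drop_eq_getElem_cons hj))

theorem prod_drop_primeFactorsList_div_minFac (hj : j < n.primeFactorsList.length) :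
    (n.primeFactorsList.drop j).prod / (n.primeFactorsList.drop j).prod.minFac =
      (n.primeFactorsList.drop (j + 1)).prod := by
  rw [minFac_prod_drop_primeFactorsList hj, List.drop_eq_getElem_cons hj, List.prod_cons,
    Nat.mul_div_cancel_left _ (prime_of_mem_primeFactorsList (List.getElem_mem hj)).pos]

theorem maxPrimeFac_prod_take_le_minFac_prod_drop (hj : j < n.primeFactorsList.length) :
    maxPrimeFac (n.primeFactorsList.take j).prod ≤ (n.primeFactorsList.drop j).prod.minFac := by
  rw [minFac_prod_drop_primeFactorsList hj]
  refine maxPrimeFac_le (prime_of_mem_primeFactorsList (List.getElem_mem hj)).one_le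
    fun p hp => ?_
  rw [primeFactorsList_prod_take] at hp
  have hsplit := (primeFactorsList_sorted n).pairwise
  rw [← List.take_append_drop j n.primeFactorsList, List.pairwise_append] at hsplit
  exact hsplit.2.2 p hp _ (List.drop_eq_getElem_cons hj ▸ List.mem_cons_self)

theorem antitone_prod_drop_primeFactorsList (n : ℕ) :
    Antitone fun j => (n.primeFactorsList.drop j).prod :=
  List.antitone_prod_drop fun _ hp => (prime_of_mem_primeFactorsList hp).one_le

end SuffixProducts

end Nat

theorem stmt_5_general (V₀ : ℝ) (hV : 1 ≤ V₀) (n : ℕ) (hn : V₀ < (n : ℝ)) :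
    ∃! uv : ℕ × ℕ, n = uv.1 * uv.2 ∧ maxPrimeFac uv.1 ≤ uv.2.minFac ∧
      V₀ < (uv.2 : ℝ) ∧ (uv.2 : ℝ) / (uv.2.minFac : ℝ) ≤ V₀ := by
  have hn0 : n ≠ 0 := by rintro rfl; norm_num at hn; linarith
  set L := n.primeFactorsList
  have hlen : ∀ {j}, V₀ < ((L.drop j).prod : ℝ) → j < L.length := fun h => by
    by_contra! hj
    simp only [List.drop_eq_nil_of_le hj, List.prod_nil, Nat.cast_one] at h
    linarith
  have hdiv : ∀ {j}, V₀ < ((L.drop j).prod : ℝ) →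
      ((L.drop j).prod : ℝ) / (L.drop j).prod.minFac = (L.drop (j + 1)).prod := fun h => by
    rw [← Nat.cast_div_charZero (Nat.minFac_dvd _),
      Nat.prod_drop_primeFactorsList_div_minFac (hlen h)]
  have hanti : Antitone fun j => ((L.drop j).prod : ℝ) :=
    Nat.mono_cast.comp_antitone (Nat.antitone_prod_drop_primeFactorsList n)
  have hstart : V₀ < ((L.drop 0).prod : ℝ) := by
    rwa [List.drop_zero, Nat.prod_primeFactorsList hn0]
  have hend : ((L.drop L.length).prod : ℝ) ≤ V₀ := by
    rwa [List.drop_length, List.prod_nil, Nat.cast_one]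
  obtain ⟨j, ⟨hj, hj1⟩, hj_unique⟩ := hanti.existsUnique_lt_of_le_succ hstart ⟨_, hend⟩
  refine ⟨((L.take j).prod, (L.drop j).prod),
    ⟨((L.prod_take_mul_prod_drop j).trans (Nat.prod_primeFactorsList hn0)).symm,
      Nat.maxPrimeFac_prod_take_le_minFac_prod_drop (hlen hj), hj, (hdiv hj).trans_le hj1⟩, ?_⟩
  rintro ⟨u, v⟩ ⟨huv, hle, hv, hv1⟩
  obtain ⟨k, rfl, rfl⟩ := Nat.exists_eq_prod_take_and_eq_prod_drop hn0 huv hle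
  obtain rfl := hj_unique k ⟨hv, (hdiv hv).symm.trans_le hv1⟩
  rfl

/-- Every `y`-smooth integer `n > V₀` (with `y ≥ 2`, `V₀ ≥ 1`) has a unique factorization
`n = u·v` with `P⁺(u) ≤ P⁻(v)`, `v > V₀` and `v/P⁻(v) ≤ V₀`. (Since `v > V₀ ≥ 1`, `v ≥ 2`
and its least prime factor is `v.minFac`, so the convention `P⁻(1) = ∞` is not needed.) -/
theorem stmt_5 (y V₀ : ℝ) (hy : 2 ≤ y) (hV : 1 ≤ V₀) (n : ℕ)
    (hsmooth : ∀ p : ℕ, p.Prime → p ∣ n → (p : ℝ) ≤ y) (hn : V₀ < (n : ℝ)) :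
    ∃! uv : ℕ × ℕ, n = uv.1 * uv.2 ∧ maxPrimeFac uv.1 ≤ uv.2.minFac ∧
      V₀ < (uv.2 : ℝ) ∧ (uv.2 : ℝ) / (uv.2.minFac : ℝ) ≤ V₀ :=
  stmt_5_general V₀ hV n hn
end

section
/- Let f be a completely multiplicative function, let χ be a Dirichlet character mod q induced by the primitive character ψ mod r, and let g be the Dirichlet inverse of f. Let h be the multiplicative function supported only on integers all of whose prime factors divide q but not r, defined by h(p^k) = g(p^k) ψ̄(p^k) on such prime powers. Then f·χ̄ = h * (f·ψ̄), and consequently for every x ≥ 1, |Σ_{n≤x} f(n)χ̄(n)| ≤ Σ_{m ≥ 1, rad(m) | q, gcd(rad(m), r) = 1} |Σ_{n ≤ x/m} f(n)ψ̄(n)|, where each |h(m)| ≤ 1 provided |g(n)| ≤ 1 for all n. -/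
/-!
Both `f·χ̄` and `h * (f·ψ̄)` are multiplicative, so it suffices to compare them at prime powers
`p^i`, `i ≥ 1`. If `p ∣ q` and `p ∤ r`, then `χ(p^i) = 0`, while `h = g·ψ̄` on powers of `p`, so the
right side is `ψ̄(p^i) (f * g)(p^i) = 0`. Otherwise `h` vanishes on nontrivial powers of `p` and the
right side is `f(p^i) ψ̄(p^i)`: this equals `f(p^i) χ̄(p^i)` when `p ∤ q`, and both vanish when
`p ∣ r`. Summing the identity over `n ≤ x` and swapping the sums gives
`S_f(x, χ) = Σ_{m ≤ x} h(m) S_f(x/m, ψ)`, and `|h| ≤ 1` on the support of `h`, which consists of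
the `m` with `rad m ∣ q` and `(rad m, r) = 1`.
-/

open ComplexConjugate

/-- The radical (squarefree kernel) of `m`. -/
def rad (m : ℕ) : ℕ := m.primeFactors.prod id

open ArithmeticFunction Finset

lemma DirichletCharacter.apply_pow_eq_zero_of_dvd {R : Type*} [CommMonoidWithZero R] {M : ℕ}
    (χ : DirichletCharacter R M) {p i : ℕ} (hp : p.Prime) (hpM : p ∣ M) (hi : i ≠ 0) :
    χ ((p ^ i : ℕ) : ZMod M) = 0 := by
  refine χ.map_nonunit fun hunit => ?_
  rw [ZMod.isUnit_iff_coprime, Nat.coprime_pow_left_iff (Nat.pos_of_ne_zero hi),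
    hp.coprime_iff_not_dvd] at hunit
  exact hunit hpM

namespace ArithmeticFunction

variable {R : Type*}

def ofFun [Zero R] (F : ℕ → R) : ArithmeticFunction R :=
  ⟨fun n => if n = 0 then 0 else F n, if_pos rfl⟩

lemma ofFun_apply [Zero R] (F : ℕ → R) {n : ℕ} (hn : n ≠ 0) : ofFun F n = F n := if_neg hn

lemma isMultiplicative_ofFun [MonoidWithZero R] {F : ℕ → R} (hF1 : F 1 = 1)
    (hFm : ∀ m n : ℕ, m.Coprime n → F (m * n) = F m * F n) : (ofFun F).IsMultiplicative := by
  refine IsMultiplicative.iff_ne_zero.mpr ⟨(ofFun_apply F one_ne_zero).trans hF1, ?_⟩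
  intro m n hm hn hmn
  rw [ofFun_apply F (mul_ne_zero hm hn), ofFun_apply F hm, ofFun_apply F hn, hFm m n hmn]

lemma ofFun_mul_ofFun_apply [Semiring R] (A B : ℕ → R) (n : ℕ) :
    (ofFun A * ofFun B) n = ∑ d ∈ n.divisors, A d * B (n / d) := by
  rw [mul_apply, Nat.sum_divisorsAntidiagonal (f := fun a b => ofFun A a * ofFun B b)]
  refine sum_congr rfl fun d hd => ?_
  rw [ofFun_apply A (Nat.ne_of_gt (Nat.pos_of_mem_divisors hd)),
    ofFun_apply B (Nat.ne_of_gt (Nat.div_pos (Nat.divisor_le hd) (Nat.pos_of_mem_divisors hd)))]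

lemma mul_apply_prime_pow_of_apply_prime_pow_eq_zero [Semiring R] {H : ArithmeticFunction R}
    (hH1 : H 1 = 1) (F : ArithmeticFunction R) {p : ℕ} (hp : p.Prime)
    (hH0 : ∀ k, k ≠ 0 → H (p ^ k) = 0) (i : ℕ) : (H * F) (p ^ i) = F (p ^ i) := by
  rw [mul_apply, Nat.sum_divisorsAntidiagonal (f := fun a b => H a * F b),
    sum_eq_single_of_mem 1 (Nat.one_mem_divisors.mpr (pow_ne_zero _ hp.ne_zero)), hH1,
    one_mul, Nat.div_one]
  intro d hd hd1
  obtain ⟨k, -, rfl⟩ := (Nat.dvd_prime_pow hp).mp (Nat.dvd_of_mem_divisors hd)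
  rw [hH0 k (by rintro rfl; exact hd1 (pow_zero p)), zero_mul]

lemma mul_apply_eq_mul_sum_of_twist [CommSemiring R] {H F : ArithmeticFunction R} {f g c : ℕ → R}
    (hc : ∀ a b, c (a * b) = c a * c b) {n : ℕ} (hH : ∀ d, d ∣ n → H d = g d * c d)
    (hF : ∀ d, d ∣ n → F d = f d * c d) : (H * F) n = c n * ∑ d ∈ n.divisors, f d * g (n / d) := by
  rw [mul_apply, Nat.sum_divisorsAntidiagonal' (f := fun a b => H a * F b), mul_sum]
  refine sum_congr rfl fun d hd => ?_
  have hdn := Nat.dvd_of_mem_divisors hd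
  rw [hH _ (Nat.div_dvd_of_dvd hdn), hF d hdn, ← Nat.div_mul_cancel hdn, hc,
    Nat.div_mul_cancel hdn]
  ring

lemma sum_Icc_eq_sum_mul_sum_Icc_div [Semiring R] {a b c : ℕ → R}
    (hc : ∀ n, 1 ≤ n → c n = ∑ d ∈ n.divisors, a d * b (n / d)) (N : ℕ) :
    ∑ n ∈ Icc 1 N, c n = ∑ d ∈ Icc 1 N, a d * ∑ e ∈ Icc 1 (N / d), b e := by
  have hIoc (M : ℕ) : Icc 1 M = Ioc 0 M := rfl
  have hpos {n M : ℕ} (hn : n ∈ Ioc 0 M) : 0 < n := (mem_Ioc.mp hn).1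
  simp only [hIoc]
  calc ∑ n ∈ Ioc 0 N, c n = ∑ n ∈ Ioc 0 N, (ofFun a * ofFun b) n :=
        sum_congr rfl fun n hn => by rw [ofFun_mul_ofFun_apply, hc n (hpos hn)]
    _ = ∑ d ∈ Ioc 0 N, ofFun a d * ∑ e ∈ Ioc 0 (N / d), ofFun b e := sum_Ioc_mul_eq_sum_sum _ _ N
    _ = _ := sum_congr rfl fun d hd => by
        rw [ofFun_apply a (hpos hd).ne', sum_congr rfl fun e he => ofFun_apply b (hpos he).ne']

end ArithmeticFunction

lemma rad_dvd_of_forall_dvd {m q : ℕ} (h : ∀ p ∈ m.primeFactors, p ∣ q) : rad m ∣ q :=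
  prod_primes_dvd q (fun _ hp => (Nat.prime_of_mem_primeFactors hp).prime) h

lemma coprime_rad_of_forall_not_dvd {m r : ℕ} (h : ∀ p ∈ m.primeFactors, ¬p ∣ r) :
    (rad m).Coprime r :=
  Nat.coprime_prod_left_iff.mpr fun p hp =>
    (Nat.prime_of_mem_primeFactors hp).coprime_iff_not_dvd.mpr (h p hp)

section Multiplicative

variable {R : Type*} {h : ℕ → R}

lemma forall_mem_primeFactors_of_apply_ne_zero [CommMonoidWithZero R] (hh1 : h 1 = 1)
    (hhm : ∀ m n : ℕ, m.Coprime n → h (m * n) = h m * h n) {P : ℕ → Prop}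
    (hP : ∀ p k : ℕ, p.Prime → 1 ≤ k → ¬P p → h (p ^ k) = 0) {d : ℕ} (hd : d ≠ 0)
    (hhd : h d ≠ 0) : ∀ p ∈ d.primeFactors, P p := by
  intro p hp
  by_contra hPp
  refine hhd ?_
  rw [Nat.multiplicative_factorization h hhm hh1 hd, Finsupp.prod]
  have hpp := Nat.prime_of_mem_primeFactors hp
  refine prod_eq_zero (i := p) (by rwa [Nat.support_factorization]) (hP p _ hpp ?_ hPp)
  exact hpp.factorization_pos_of_dvd hd (Nat.dvd_of_mem_primeFactors hp)

lemma norm_apply_le_one_of_multiplicative [NormedCommRing R] [NormOneClass R] (hh1 : h 1 = 1)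
    (hhm : ∀ m n : ℕ, m.Coprime n → h (m * n) = h m * h n)
    (hpow : ∀ p k : ℕ, p.Prime → 1 ≤ k → ‖h (p ^ k)‖ ≤ 1) {m : ℕ} (hm : m ≠ 0) :
    ‖h m‖ ≤ 1 := by
  rw [Nat.multiplicative_factorization h hhm hh1 hm, Finsupp.prod]
  refine (Finset.norm_prod_le _ _).trans (prod_le_one (fun _ _ => norm_nonneg _) fun p hp => ?_)
  rw [Nat.support_factorization] at hp
  have hpp := Nat.prime_of_mem_primeFactors hp
  exact hpow p _ hpp (hpp.factorization_pos_of_dvd hm (Nat.dvd_of_mem_primeFactors hp))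

end Multiplicative

lemma norm_sum_Icc_le_sum_filter {R : Type*} [NormedRing R] {a b c : ℕ → R}
    (hc : ∀ n, 1 ≤ n → c n = ∑ d ∈ n.divisors, a d * b (n / d)) (ha : ∀ d, 1 ≤ d → ‖a d‖ ≤ 1)
    (P : ℕ → Prop) [DecidablePred P] (hP : ∀ d, 1 ≤ d → a d ≠ 0 → P d) (N : ℕ) :
    ‖∑ n ∈ Icc 1 N, c n‖ ≤ ∑ d ∈ (Icc 1 N).filter P, ‖∑ e ∈ Icc 1 (N / d), b e‖ := by
  rw [sum_Icc_eq_sum_mul_sum_Icc_div hc, ← sum_filter_of_ne fun d hd had =>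
    hP d (mem_Icc.mp hd).1 (left_ne_zero_of_mul had)]
  refine (norm_sum_le _ _).trans (sum_le_sum fun d hd => ?_)
  calc ‖a d * ∑ e ∈ Icc 1 (N / d), b e‖ ≤ ‖a d‖ * ‖∑ e ∈ Icc 1 (N / d), b e‖ := norm_mul_le _ _
    _ ≤ 1 * ‖∑ e ∈ Icc 1 (N / d), b e‖ :=
        mul_le_mul_of_nonneg_right (ha d (mem_Icc.mp (mem_filter.mp hd).1).1) (norm_nonneg _)
    _ = _ := one_mul _

noncomputable def twistConj (f : ℕ → ℂ) {M : ℕ} (χ : DirichletCharacter ℂ M) :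
    ArithmeticFunction ℂ :=
  ofFun fun n => f n * conj (χ n)

lemma twistConj_apply (f : ℕ → ℂ) {M : ℕ} (χ : DirichletCharacter ℂ M) {n : ℕ} (hn : n ≠ 0) :
    twistConj f χ n = f n * conj (χ n) :=
  ofFun_apply _ hn

lemma isMultiplicative_twistConj {f : ℕ → ℂ} (hf1 : f 1 = 1)
    (hfm : ∀ m n : ℕ, f (m * n) = f m * f n) {M : ℕ} (χ : DirichletCharacter ℂ M) :
    (twistConj f χ).IsMultiplicative :=
  isMultiplicative_ofFun (by simp [hf1]) fun m n _ => by
    rw [hfm, Nat.cast_mul, map_mul, map_mul]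
    ring

theorem twistConj_eq_ofFun_mul_twistConj {q r : ℕ} {χ : DirichletCharacter ℂ q}
    {ψ : DirichletCharacter ℂ r} (hind : ∀ n : ℕ, n.Coprime q → χ (n : ZMod q) = ψ (n : ZMod r))
    {f g h : ℕ → ℂ} (hf1 : f 1 = 1) (hfm : ∀ m n : ℕ, f (m * n) = f m * f n)
    (hg : ∀ n : ℕ, 1 ≤ n → (∑ d ∈ n.divisors, f d * g (n / d)) = if n = 1 then 1 else 0)
    (hh1 : h 1 = 1) (hhm : ∀ m n : ℕ, m.Coprime n → h (m * n) = h m * h n)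
    (hsupp : ∀ p k : ℕ, p.Prime → 1 ≤ k → ¬(p ∣ q ∧ ¬p ∣ r) → h (p ^ k) = 0)
    (hval : ∀ p k : ℕ, p.Prime → p ∣ q → ¬p ∣ r →
      h (p ^ k) = g (p ^ k) * conj (ψ ((p ^ k : ℕ) : ZMod r))) :
    twistConj f χ = ofFun h * twistConj f ψ := by
  have hH := isMultiplicative_ofFun hh1 hhm
  have hHF := hH.mul (isMultiplicative_twistConj hf1 hfm ψ)
  refine (IsMultiplicative.eq_iff_eq_on_prime_powers _ (isMultiplicative_twistConj hf1 hfm χ) _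
    hHF).mpr fun p i hp => ?_
  rcases Nat.eq_zero_or_pos i with rfl | hi
  · rw [pow_zero, hHF.map_one, (isMultiplicative_twistConj hf1 hfm χ).map_one]
  have hpi : p ^ i ≠ 0 := pow_ne_zero _ hp.ne_zero
  by_cases hpqr : p ∣ q ∧ ¬p ∣ r
  · have hH_pow : ∀ d, d ∣ p ^ i → ofFun h d = g d * conj (ψ d) := by
      intro d hd
      obtain ⟨k, -, rfl⟩ := (Nat.dvd_prime_pow hp).mp hd
      rw [ofFun_apply _ (pow_ne_zero _ hp.ne_zero), hval p k hp hpqr.1 hpqr.2]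
    have hF_pow : ∀ d, d ∣ p ^ i → twistConj f ψ d = f d * conj (ψ d) :=
      fun d hd => twistConj_apply f ψ (ne_zero_of_dvd_ne_zero hpi hd)
    rw [mul_apply_eq_mul_sum_of_twist (fun a b => by rw [Nat.cast_mul, map_mul, map_mul])
      hH_pow hF_pow, hg _ (Nat.one_le_iff_ne_zero.mpr hpi),
      if_neg (Nat.one_lt_pow hi.ne' hp.one_lt).ne', mul_zero, twistConj_apply f χ hpi,
      χ.apply_pow_eq_zero_of_dvd hp hpqr.1 hi.ne', _root_.map_zero, mul_zero]
  · have hH_pow : ∀ k, k ≠ 0 → ofFun h (p ^ k) = 0 := fun k hk => by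
      rw [ofFun_apply _ (pow_ne_zero _ hp.ne_zero)]
      exact hsupp p k hp (Nat.one_le_iff_ne_zero.mpr hk) hpqr
    rw [mul_apply_prime_pow_of_apply_prime_pow_eq_zero hH.map_one _ hp hH_pow,
      twistConj_apply f χ hpi, twistConj_apply f ψ hpi]
    by_cases hpq : p ∣ q
    · rw [χ.apply_pow_eq_zero_of_dvd hp hpq hi.ne', ψ.apply_pow_eq_zero_of_dvd hp (by tauto) hi.ne']
    · rw [hind _ (Nat.Coprime.pow_left _ (hp.coprime_iff_not_dvd.mpr hpq))]

theorem stmt_8_general (q r : ℕ)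
    (χ : DirichletCharacter ℂ q) (ψ : DirichletCharacter ℂ r)
    (hind : ∀ n : ℕ, Nat.Coprime n q → χ (n : ZMod q) = ψ (n : ZMod r))
    (f g h : ℕ → ℂ)
    (hf1 : f 1 = 1) (hfm : ∀ m n : ℕ, f (m * n) = f m * f n)
    (hg : ∀ n : ℕ, 1 ≤ n →
      (∑ d ∈ n.divisors, f d * g (n / d)) = if n = 1 then 1 else 0)
    (hgb : ∀ n : ℕ, ‖g n‖ ≤ 1)
    (hh1 : h 1 = 1)
    (hhm : ∀ m n : ℕ, Nat.Coprime m n → h (m * n) = h m * h n)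
    (hsupp : ∀ p k : ℕ, p.Prime → 1 ≤ k → ¬(p ∣ q ∧ ¬ p ∣ r) → h (p ^ k) = 0)
    (hval : ∀ p k : ℕ, p.Prime → p ∣ q → ¬ p ∣ r →
      h (p ^ k) = g (p ^ k) * conj (ψ ((p ^ k : ℕ) : ZMod r)))
    (x : ℝ) :
    (∀ n : ℕ, 1 ≤ n → f n * conj (χ (n : ZMod q)) =
      ∑ d ∈ n.divisors, h d * (f (n / d) * conj (ψ ((n / d : ℕ) : ZMod r)))) ∧
    (∀ m : ℕ, 1 ≤ m → ‖h m‖ ≤ 1) ∧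
    ‖∑ n ∈ Finset.Icc 1 ⌊x⌋₊, f n * conj (χ (n : ZMod q))‖ ≤
      ∑ m ∈ (Finset.Icc 1 ⌊x⌋₊).filter (fun m => rad m ∣ q ∧ Nat.Coprime (rad m) r),
        ‖∑ n ∈ Finset.Icc 1 ⌊x / m⌋₊, f n * conj (ψ (n : ZMod r))‖ := by
  have hconv (n : ℕ) (hn : 1 ≤ n) : f n * conj (χ (n : ZMod q)) =
      ∑ d ∈ n.divisors, h d * (f (n / d) * conj (ψ ((n / d : ℕ) : ZMod r))) := by
    rw [← twistConj_apply f χ (by omega),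
      twistConj_eq_ofFun_mul_twistConj hind hf1 hfm hg hh1 hhm hsupp hval]
    exact ofFun_mul_ofFun_apply _ _ n
  have hnorm (m : ℕ) (hm : 1 ≤ m) : ‖h m‖ ≤ 1 := by
    refine norm_apply_le_one_of_multiplicative hh1 hhm (fun p k hp hk => ?_) (by omega)
    by_cases hpqr : p ∣ q ∧ ¬p ∣ r
    · rw [hval p k hp hpqr.1 hpqr.2, norm_mul, RCLike.norm_conj]
      exact mul_le_one₀ (hgb _) (norm_nonneg _) (ψ.norm_le_one _)
    · rw [hsupp p k hp hk hpqr, norm_zero]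
      exact zero_le_one
  refine ⟨hconv, hnorm, ?_⟩
  simp_rw [Nat.floor_div_natCast]
  refine norm_sum_Icc_le_sum_filter hconv hnorm _ (fun d hd hhd => ?_) _
  have hP := forall_mem_primeFactors_of_apply_ne_zero hh1 hhm hsupp (by omega) hhd
  exact ⟨rad_dvd_of_forall_dvd fun p hp => (hP p hp).1,
    coprime_rad_of_forall_not_dvd fun p hp => (hP p hp).2⟩

/-- Let `f` be completely multiplicative with Dirichlet inverse `g` satisfying
`|g(n)| ≤ 1`, let `χ` mod `q` be induced by the primitive character `ψ` mod `r`, and let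
`h` be the multiplicative function supported on integers all of whose prime factors
divide `q` but not `r`, with `h(p^k) = g(p^k) ψ̄(p^k)` there. Then
`f·χ̄ = h * (f·ψ̄)` (Dirichlet convolution), each `|h(m)| ≤ 1`, and
`|Σ_{n≤x} f(n)χ̄(n)| ≤ Σ_{m, rad(m) ∣ q, (rad(m),r)=1} |Σ_{n≤x/m} f(n)ψ̄(n)|`. -/
theorem stmt_8 (q r : ℕ) (hrq : r ∣ q)
    (χ : DirichletCharacter ℂ q) (ψ : DirichletCharacter ℂ r) (hψ : ψ.IsPrimitive)
    (hind : ∀ n : ℕ, Nat.Coprime n q → χ (n : ZMod q) = ψ (n : ZMod r))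
    (f g h : ℕ → ℂ)
    (hf1 : f 1 = 1) (hfm : ∀ m n : ℕ, f (m * n) = f m * f n)
    (hg : ∀ n : ℕ, 1 ≤ n →
      (∑ d ∈ n.divisors, f d * g (n / d)) = if n = 1 then 1 else 0)
    (hgb : ∀ n : ℕ, ‖g n‖ ≤ 1)
    (hh1 : h 1 = 1)
    (hhm : ∀ m n : ℕ, Nat.Coprime m n → h (m * n) = h m * h n)
    (hsupp : ∀ p k : ℕ, p.Prime → 1 ≤ k → ¬(p ∣ q ∧ ¬ p ∣ r) → h (p ^ k) = 0)
    (hval : ∀ p k : ℕ, p.Prime → p ∣ q → ¬ p ∣ r →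
      h (p ^ k) = g (p ^ k) * conj (ψ ((p ^ k : ℕ) : ZMod r)))
    (x : ℝ) (hx : 1 ≤ x) :
    (∀ n : ℕ, 1 ≤ n → f n * conj (χ (n : ZMod q)) =
      ∑ d ∈ n.divisors, h d * (f (n / d) * conj (ψ ((n / d : ℕ) : ZMod r)))) ∧
    (∀ m : ℕ, 1 ≤ m → ‖h m‖ ≤ 1) ∧
    ‖∑ n ∈ Finset.Icc 1 ⌊x⌋₊, f n * conj (χ (n : ZMod q))‖ ≤
      ∑ m ∈ (Finset.Icc 1 ⌊x⌋₊).filter (fun m => rad m ∣ q ∧ Nat.Coprime (rad m) r),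
        ‖∑ n ∈ Finset.Icc 1 ⌊x / m⌋₊, f n * conj (ψ (n : ZMod r))‖ :=
  stmt_8_general q r χ ψ hind f g h hf1 hfm hg hgb hh1 hhm hsupp hval x
end
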